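/- Greedy optimality: define the greedy sequence P_0 = ∅ and P_{i+1} = P_i ∪ {u_i}, where u_i is a leaf not in P_i minimizing f⃗(P_i ∪ {u}) lexicographically. Then for each i ≤ ρ there exists an optimal placement P* of size ρ (lexicominimizing f⃗) with P_i ⊆ P*. -/

import Mathlib

/-! Exchange argument. Let `P ⊆ P*` with `P*` optimal, and let `u ∉ P*` be the next greedy leaf.
Choose `w ∈ P* \ P` sharing the most ancestors with `u`; then no member of `P* \ P` lies below a
node that is an ancestor of `u` but not of `w`. Trading `w` for `u` only matters on the ancestors
of exactly one of them: on those of `u` the failure numbers under `P* \ {w}` equal those under `P`,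
on those of `w` they can only be larger, so the greedy preference for `u` over `w` at `P` carries
over and `P* \ {w} ∪ {u}` is optimal again.

Aggregates are encoded in `Colex (ℕ →₀ ℕ)`, a linearly ordered cancellative monoid whose order is
`AggLe`; adding a leaf shifts the contribution of its ancestors one index up. -/

open scoped Classical

/-- A rooted tree on a finite vertex set `V`, given by a parent function under which
every vertex reaches the root. -/
structure FailTree (V : Type*) [Fintype V] where
  root : V
  parent : V → V
  parent_root : parent root = root
  reaches_root : ∀ v, ∃ n : ℕ, parent^[n] v = root

namespace FailTree

variable {V : Type*} [Fintype V]

/-- `T.Desc u v` : `u` is a descendant of `v` (every node is a descendant of itself). -/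
def Desc (T : FailTree V) (u v : V) : Prop := ∃ n : ℕ, T.parent^[n] u = v

/-- A leaf is a node with no children. -/
def IsLeaf (T : FailTree V) (v : V) : Prop := ∀ u, T.parent u = v → u = v

noncomputable def leaves (T : FailTree V) : Finset V :=
  Finset.univ.filter fun v => T.IsLeaf v

/-- The failure number `f(v, P)` of node `v` under placement `P`:
the number of members of `P` that are descendants of `v`. -/
noncomputable def fnum (T : FailTree V) (v : V) (P : Finset V) : ℕ :=
  (P.filter fun p => T.Desc p v).card

/-- The failure aggregate restricted to a set `S` of nodes: entry `i` counts the
nodes of `S` having failure number `i`. -/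
noncomputable def faggOn (T : FailTree V) (S P : Finset V) : ℕ → ℕ :=
  fun i => (S.filter fun v => T.fnum v P = i).card

/-- The failure aggregate `f⃗(P)`: entry `i` counts the nodes with failure number `i`. -/
noncomputable def fagg (T : FailTree V) (P : Finset V) : ℕ → ℕ :=
  T.faggOn Finset.univ P

/-- The node set of the path from the root to `x`, i.e. all ancestors of `x`. -/
noncomputable def pathTo (T : FailTree V) (x : V) : Finset V :=
  Finset.univ.filter fun v => T.Desc x v

/-- The number of leaves in the subtree rooted at `v`. -/
noncomputable def leafCount (T : FailTree V) (v : V) : ℕ :=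
  (T.leaves.filter fun l => T.Desc l v).card

end FailTree

/-- Strict lexicographic comparison of failure aggregates; entries with higher index
(higher failure number) are more significant. -/
def AggLt (p q : ℕ → ℕ) : Prop := ∃ m, p m < q m ∧ ∀ i, m < i → p i = q i

/-- Lexicographic comparison (non-strict) of failure aggregates. -/
def AggLe (p q : ℕ → ℕ) : Prop := p = q ∨ AggLt p q

open Finset Finsupp

noncomputable def succShift : Colex (ℕ →₀ ℕ) →+ Colex (ℕ →₀ ℕ) :=
  mapDomain.addMonoidHom Nat.succ

lemma succShift_toColex_single (n k : ℕ) :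
    succShift (toColex (single n k)) = toColex (single (n + 1) k) :=
  mapDomain_single

lemma succShift_apply_succ (a : Colex (ℕ →₀ ℕ)) (k : ℕ) :
    ofColex (succShift a) (k + 1) = ofColex a k :=
  mapDomain_apply Nat.succ_injective _ k

lemma succShift_add_lt_succShift_add {a b : Colex (ℕ →₀ ℕ)} (h : a < b) :
    succShift a + b < succShift b + a := by
  obtain ⟨i, habove, hi⟩ := Colex.lt_iff.mp h
  refine Colex.lt_iff.mpr ⟨i + 1, fun j hj => ?_, ?_⟩
  · obtain ⟨k, rfl⟩ : ∃ k, j = k + 1 := ⟨j - 1, by omega⟩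
    have h1 : ofColex a k = ofColex b k := habove k (by omega)
    have h2 : ofColex a (k + 1) = ofColex b (k + 1) := habove (k + 1) (by omega)
    simp only [ofColex_add, Finsupp.add_apply, succShift_apply_succ]
    omega
  · have h2 : ofColex a (i + 1) = ofColex b (i + 1) := habove (i + 1) (by omega)
    have hi : ofColex a i < ofColex b i := hi
    simp only [ofColex_add, Finsupp.add_apply, succShift_apply_succ]
    omega

lemma succShift_add_le_succShift_add_iff {a b : Colex (ℕ →₀ ℕ)} :
    succShift a + b ≤ succShift b + a ↔ a ≤ b := by
  refine ⟨fun h => not_lt.mp fun hba => (succShift_add_lt_succShift_add hba).not_ge h,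
    fun h => ?_⟩
  rcases h.eq_or_lt with rfl | hlt
  · exact le_rfl
  · exact (succShift_add_lt_succShift_add hlt).le

lemma aggLe_ofColex_iff {a b : Colex (ℕ →₀ ℕ)} : AggLe ⇑(ofColex a) ⇑(ofColex b) ↔ a ≤ b := by
  unfold AggLe AggLt
  rw [le_iff_eq_or_lt, Colex.lt_iff]
  exact or_congr (DFunLike.coe_fn_eq.trans ofColex_inj) (exists_congr fun _ => and_comm)

namespace FailTree

variable {V : Type*} [Fintype V] (T : FailTree V)

lemma Desc.trans {T : FailTree V} {a b c : V} (hab : T.Desc a b) (hbc : T.Desc b c) :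
    T.Desc a c := by
  obtain ⟨m, rfl⟩ := hab
  obtain ⟨n, rfl⟩ := hbc
  exact ⟨n + m, Function.iterate_add_apply _ _ _ _⟩

lemma Desc.total_of_desc {T : FailTree V} {u a b : V} (ha : T.Desc u a) (hb : T.Desc u b) :
    T.Desc a b ∨ T.Desc b a := by
  obtain ⟨m, rfl⟩ := ha
  obtain ⟨n, rfl⟩ := hb
  rcases le_total m n with h | h
  · exact .inl ⟨n - m, by rw [← Function.iterate_add_apply, Nat.sub_add_cancel h]⟩
  · exact .inr ⟨m - n, by rw [← Function.iterate_add_apply, Nat.sub_add_cancel h]⟩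

lemma mem_pathTo {x v : V} : v ∈ T.pathTo x ↔ T.Desc x v := by
  simp [pathTo]

lemma fnum_mono {P Q : Finset V} (h : P ⊆ Q) (v : V) : T.fnum v P ≤ T.fnum v Q :=
  card_le_card (filter_subset_filter _ h)

lemma fnum_eq_of_subset {P Q : Finset V} {v : V} (h : P ⊆ Q) (hQ : ∀ q ∈ Q \ P, ¬ T.Desc q v) :
    T.fnum v Q = T.fnum v P := by
  unfold fnum
  congr 1
  ext q
  simp only [mem_filter]
  exact ⟨fun ⟨hq, hqv⟩ => ⟨by_contra fun hqP => hQ q (mem_sdiff.mpr ⟨hq, hqP⟩) hqv, hqv⟩,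
    fun ⟨hq, hqv⟩ => ⟨h hq, hqv⟩⟩

lemma fnum_insert {x v : V} {Q : Finset V} (hx : x ∉ Q) :
    T.fnum v (insert x Q) = T.fnum v Q + if T.Desc x v then 1 else 0 := by
  unfold fnum
  rw [filter_insert]
  split_ifs
  · exact card_insert_of_notMem fun h => hx (mem_filter.mp h).1
  · rfl

noncomputable def aggOn (S P : Finset V) : Colex (ℕ →₀ ℕ) :=
  ∑ v ∈ S, toColex (single (T.fnum v P) 1)

noncomputable def agg (P : Finset V) : Colex (ℕ →₀ ℕ) := T.aggOn univ P

lemma ofColex_aggOn_apply (S P : Finset V) (i : ℕ) :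
    ofColex (T.aggOn S P) i = T.faggOn S P i := by
  show (∑ v ∈ S, single (T.fnum v P) 1) i = _
  rw [finsetSum_apply, faggOn, card_filter]
  exact sum_congr rfl fun v _ => single_apply

lemma coe_ofColex_agg (P : Finset V) : ⇑(ofColex (T.agg P)) = T.fagg P :=
  funext (T.ofColex_aggOn_apply univ P)

lemma aggLe_fagg_iff {P Q : Finset V} : AggLe (T.fagg P) (T.fagg Q) ↔ T.agg P ≤ T.agg Q := by
  rw [← coe_ofColex_agg, ← coe_ofColex_agg, aggLe_ofColex_iff]

lemma aggOn_congr {S P Q : Finset V} (h : ∀ v ∈ S, T.fnum v P = T.fnum v Q) :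
    T.aggOn S P = T.aggOn S Q :=
  sum_congr rfl fun v hv => by rw [h v hv]

lemma aggOn_mono {S P Q : Finset V} (h : ∀ v ∈ S, T.fnum v P ≤ T.fnum v Q) :
    T.aggOn S P ≤ T.aggOn S Q :=
  sum_le_sum fun v hv => Colex.single_le_iff.mpr (h v hv)

lemma aggOn_insert_of_subset {S Q : Finset V} {x : V} (hx : x ∉ Q) (hS : S ⊆ T.pathTo x) :
    T.aggOn S (insert x Q) = succShift (T.aggOn S Q) := by
  rw [aggOn, aggOn, map_sum]
  refine sum_congr rfl fun v hv => ?_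
  rw [succShift_toColex_single, T.fnum_insert hx, if_pos ((T.mem_pathTo).mp (hS hv))]

lemma aggOn_insert_of_disjoint {S Q : Finset V} {x : V} (hx : x ∉ Q)
    (hS : Disjoint S (T.pathTo x)) : T.aggOn S (insert x Q) = T.aggOn S Q :=
  T.aggOn_congr fun v hv => by
    rw [T.fnum_insert hx, if_neg fun h => disjoint_left.mp hS hv ((T.mem_pathTo).mpr h),
      add_zero]

lemma agg_insert_add_aggOn_pathTo {Q : Finset V} {x : V} (hx : x ∉ Q) :
    T.agg (insert x Q) + T.aggOn (T.pathTo x) Q =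
      T.agg Q + succShift (T.aggOn (T.pathTo x) Q) := by
  have split (P : Finset V) : T.agg P = T.aggOn (T.pathTo x) P + T.aggOn (T.pathTo x)ᶜ P :=
    (sum_add_sum_compl _ _).symm
  rw [split, split, T.aggOn_insert_of_subset hx subset_rfl,
    T.aggOn_insert_of_disjoint hx disjoint_compl_left]
  abel

lemma agg_insert_le_agg_insert_iff {Q : Finset V} {x y : V} (hx : x ∉ Q) (hy : y ∉ Q) :
    T.agg (insert x Q) ≤ T.agg (insert y Q) ↔
      T.aggOn (T.pathTo x \ T.pathTo y) Q ≤ T.aggOn (T.pathTo y \ T.pathTo x) Q := by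
  set A := T.aggOn (T.pathTo x) Q
  set B := T.aggOn (T.pathTo y) Q
  rw [aggOn, aggOn, sum_sdiff_le_sum_sdiff, ← aggOn, ← aggOn]
  calc T.agg (insert x Q) ≤ T.agg (insert y Q)
      ↔ T.agg (insert x Q) + A + B ≤ T.agg (insert y Q) + B + A := by
        rw [add_right_comm (T.agg (insert y Q)) B A, add_le_add_iff_right, add_le_add_iff_right]
    _ ↔ T.agg Q + succShift A + B ≤ T.agg Q + succShift B + A := by
        rw [T.agg_insert_add_aggOn_pathTo hx, T.agg_insert_add_aggOn_pathTo hy]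
    _ ↔ A ≤ B := by
        rw [add_assoc, add_assoc, add_le_add_iff_left, succShift_add_le_succShift_add_iff]

lemma exists_mem_forall_pathTo_sdiff_not_desc (u : V) {R : Finset V} (hR : R.Nonempty) :
    ∃ w ∈ R, ∀ v ∈ T.pathTo u \ T.pathTo w, ∀ r ∈ R, ¬ T.Desc r v := by
  obtain ⟨w, hw, hmax⟩ := R.exists_max_image (fun r => #(T.pathTo u ∩ T.pathTo r)) hR
  refine ⟨w, hw, fun v hv r hr hrv => ?_⟩
  simp only [mem_sdiff, mem_pathTo] at hv
  have hsub : T.pathTo u ∩ T.pathTo w ⊂ T.pathTo u ∩ T.pathTo r := by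
    refine (ssubset_iff_of_subset fun c hc => ?_).mpr
      ⟨v, by simp [mem_pathTo, hv.1, hrv], by simp [mem_pathTo, hv.2]⟩
    simp only [mem_inter, mem_pathTo] at hc ⊢
    rcases hv.1.total_of_desc hc.1 with hvc | hcv
    · exact ⟨hc.1, hrv.trans hvc⟩
    · exact absurd (hc.2.trans hcv) hv.2
  exact (card_lt_card hsub).not_ge (hmax r hr)

lemma agg_insert_erase_le {P Pstar : Finset V} {u w : V} (hP : P ⊆ Pstar) (hu : u ∉ Pstar)
    (hw : w ∈ Pstar \ P) (hnear : ∀ v ∈ T.pathTo u \ T.pathTo w, ∀ r ∈ Pstar \ P, ¬ T.Desc r v)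
    (hgreedy : T.agg (insert u P) ≤ T.agg (insert w P)) :
    T.agg (insert u (Pstar.erase w)) ≤ T.agg Pstar := by
  obtain ⟨hwPstar, hwP⟩ := mem_sdiff.mp hw
  have hPQ : P ⊆ Pstar.erase w := subset_erase.mpr ⟨hP, hwP⟩
  have huQ : u ∉ Pstar.erase w := fun h => hu (mem_of_mem_erase h)
  have hexcl := (T.agg_insert_le_agg_insert_iff (fun h => hu (hP h)) hwP).mp hgreedy
  calc T.agg (insert u (Pstar.erase w)) ≤ T.agg (insert w (Pstar.erase w)) := by
        refine (T.agg_insert_le_agg_insert_iff huQ (notMem_erase w Pstar)).mpr ?_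
        calc T.aggOn (T.pathTo u \ T.pathTo w) (Pstar.erase w)
            = T.aggOn (T.pathTo u \ T.pathTo w) P := T.aggOn_congr fun v hv =>
              T.fnum_eq_of_subset hPQ fun q hq =>
                hnear v hv q (sdiff_subset_sdiff (erase_subset _ _) le_rfl hq)
          _ ≤ T.aggOn (T.pathTo w \ T.pathTo u) P := hexcl
          _ ≤ T.aggOn (T.pathTo w \ T.pathTo u) (Pstar.erase w) :=
              T.aggOn_mono fun v _ => T.fnum_mono hPQ v
    _ = T.agg Pstar := by rw [insert_erase hwPstar]

def IsOptimal (ρ : ℕ) (P : Finset V) : Prop :=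
  P ∈ T.leaves.powersetCard ρ ∧ ∀ Q ∈ T.leaves.powersetCard ρ, T.agg P ≤ T.agg Q

lemma isOptimal_iff {ρ : ℕ} {P : Finset V} : T.IsOptimal ρ P ↔ P ⊆ T.leaves ∧ P.card = ρ ∧
    ∀ Q : Finset V, Q ⊆ T.leaves → Q.card = ρ → AggLe (T.fagg P) (T.fagg Q) := by
  simp only [IsOptimal, mem_powersetCard, aggLe_fagg_iff, and_imp, and_assoc]

lemma exists_isOptimal {ρ : ℕ} (hρ : ρ ≤ T.leaves.card) : ∃ P, T.IsOptimal ρ P :=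
  (T.leaves.powersetCard ρ).exists_min_image T.agg (powersetCard_nonempty.mpr hρ)

lemma IsOptimal.exists_superset_insert {T : FailTree V} {ρ : ℕ} {P Pstar : Finset V} {u : V}
    (hopt : T.IsOptimal ρ Pstar) (hP : P ⊂ Pstar) (hu : u ∈ T.leaves)
    (hgreedy : ∀ u' ∈ T.leaves, u' ∉ P → T.agg (insert u P) ≤ T.agg (insert u' P)) :
    ∃ P', T.IsOptimal ρ P' ∧ insert u P ⊆ P' := by
  by_cases huPstar : u ∈ Pstar
  · exact ⟨Pstar, hopt, insert_subset huPstar hP.subset⟩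
  obtain ⟨hleaves, hcard⟩ := mem_powersetCard.mp hopt.1
  obtain ⟨w, hw, hnear⟩ := T.exists_mem_forall_pathTo_sdiff_not_desc u
    (sdiff_nonempty.mpr hP.not_subset)
  obtain ⟨hwPstar, hwP⟩ := mem_sdiff.mp hw
  refine ⟨insert u (Pstar.erase w), ⟨mem_powersetCard.mpr ⟨?_, ?_⟩, fun Q hQ => ?_⟩, ?_⟩
  · exact insert_subset hu ((erase_subset w Pstar).trans hleaves)
  · rw [card_insert_of_notMem fun h => huPstar (mem_of_mem_erase h), card_erase_add_one hwPstar,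
      hcard]
  · exact (T.agg_insert_erase_le hP.subset huPstar hw hnear
      (hgreedy w (hleaves hwPstar) hwP)).trans (hopt.2 Q hQ)
  · exact insert_subset_insert u (subset_erase.mpr ⟨hP.subset, hwP⟩)

end FailTree

/-- Theorem 1 (greedy optimality): if `Pseq` is the greedy sequence of partial
placements (each step adds a leaf lexicominimizing the failure aggregate), then every
partial placement `Pseq i` (for `i ≤ ρ`) extends to an optimal placement of size `ρ`. -/
theorem greedy_subset_of_optimal {V : Type*} [Fintype V] (T : FailTree V)
    (ρ : ℕ) (hρ : ρ ≤ T.leaves.card)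
    (Pseq : ℕ → Finset V) (h0 : Pseq 0 = ∅)
    (hstep : ∀ i < ρ, ∃ u ∈ T.leaves, u ∉ Pseq i ∧ Pseq (i + 1) = insert u (Pseq i) ∧
      ∀ u' ∈ T.leaves, u' ∉ Pseq i →
        AggLe (T.fagg (insert u (Pseq i))) (T.fagg (insert u' (Pseq i)))) :
    ∀ i ≤ ρ, ∃ Pstar : Finset V, Pstar ⊆ T.leaves ∧ Pstar.card = ρ ∧
      (∀ Q : Finset V, Q ⊆ T.leaves → Q.card = ρ → AggLe (T.fagg Pstar) (T.fagg Q)) ∧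
      Pseq i ⊆ Pstar := by
  have hcard : ∀ i ≤ ρ, (Pseq i).card = i := by
    intro i
    induction i with
    | zero => simp [h0]
    | succ n ih =>
      intro hn
      obtain ⟨u, -, hu, hins, -⟩ := hstep n (by omega)
      rw [hins, card_insert_of_notMem hu, ih (by omega)]
  suffices ∀ i ≤ ρ, ∃ Pstar, T.IsOptimal ρ Pstar ∧ Pseq i ⊆ Pstar by
    simpa only [T.isOptimal_iff, and_assoc] using this
  intro i
  induction i with
  | zero => exact fun _ => (T.exists_isOptimal hρ).imp fun P hP => ⟨hP, by simp [h0]⟩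
  | succ n ih =>
    intro hn
    obtain ⟨Pstar, hopt, hsub⟩ := ih (by omega)
    obtain ⟨u, hu, -, hins, hgreedy⟩ := hstep n hn
    have hne : Pseq n ≠ Pstar := by
      rintro rfl
      have := (mem_powersetCard.mp hopt.1).2
      have := hcard n (by omega)
      omega
    rw [hins]
    exact hopt.exists_superset_insert (hsub.ssubset_of_ne hne) hu
      fun u' hu' hu'P => T.aggLe_fagg_iff.mp (hgreedy u' hu' hu'P)
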